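/- arXiv:1304.3757 — 3 statements merged into one kernel-verified Lean document; each statement's English description precedes it below -/
import Mathlib

section
/- Let H be a complex Hilbert space, E a finite-dimensional subspace, F a subspace of E, and u a unitary operator on H fixing every vector of E^⊥. Then there exists a unique unitary operator v on H such that (i) v fixes every vector of F^⊥ and (ii) the image of H under (u - v) is contained in the image of F^⊥ under (u - 1). -/
/-!
Everything rests on one fact about an isometry `u`: if `u r - r ⊥ r` then `u r = r`.

Uniqueness: two solutions `v, v'` preserve `F`, and on `F` their difference is `u r - r` with
`r ∈ Fᗮ`; lying in `F`, it is orthogonal to `r`, hence zero.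

Existence: with `G = E ⊓ Fᗮ`, look for `v f = u (f - t f) + t f` with `t f ∈ G`, so that
`(u - v) f = (u - 1) (t f)`. Then `v f ∈ E`, and `v f ∈ F` amounts to
`P_G (u f) = P_G (u - 1) (t f)`, a linear equation on the finite-dimensional `G`. It is solvable,
linearly in `f`: a vector `x ∈ G` orthogonal to the range of `P_G (u - 1)` satisfies
`u x - x ⊥ x`, so `u x = x` and `⟪x, u f⟫ = ⟪u x, u f⟫ = ⟪x, f⟫ = 0`. The resulting map `F → F`
is isometric by Pythagoras, and extends by the identity on `Fᗮ`.
-/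

open Submodule
open scoped InnerProductSpace

theorem LinearMap.exists_comp_eq_of_range_le {R M N P : Type*} [Ring R]
    [AddCommGroup M] [Module R M] [AddCommGroup N] [Module R N]
    [AddCommGroup P] [Module R P] [Module.Projective R P]
    (f : M →ₗ[R] N) (g : P →ₗ[R] N) (h : range g ≤ range f) :
    ∃ t : P →ₗ[R] M, f ∘ₗ t = g := by
  obtain ⟨t, ht⟩ := Module.projective_lifting_property f.rangeRestrict
    (g.codRestrict _ fun x ↦ h ⟨x, rfl⟩) f.surjective_rangeRestrict
  exact ⟨t, ext fun x ↦ congr_arg Subtype.val (LinearMap.congr_fun ht x)⟩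

section

variable {𝕜 H : Type*} [RCLike 𝕜] [NormedAddCommGroup H] [InnerProductSpace 𝕜 H]

namespace LinearIsometry

variable (u : H →ₗᵢ[𝕜] H)

theorem apply_eq_self_of_inner_sub_eq_zero {x : H} (h : ⟪u x - x, x⟫_𝕜 = 0) : u x = x := by
  rw [inner_sub_left, sub_eq_zero] at h
  have hre : RCLike.re ⟪u x, x⟫_𝕜 = ‖x‖ ^ 2 := by rw [h, inner_self_eq_norm_sq]
  have hsq := norm_sub_sq (𝕜 := 𝕜) (u x) x
  rw [u.norm_map, hre] at hsq
  rw [← sub_eq_zero, ← norm_eq_zero, ← sq_eq_zero_iff, hsq]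
  ring

theorem apply_mem_of_fixes_orthogonal (K : Submodule 𝕜 H) [K.HasOrthogonalProjection]
    (hu : ∀ x ∈ Kᗮ, u x = x) {x : H} (hx : x ∈ K) : u x ∈ K := by
  rw [← K.orthogonal_orthogonal]
  intro y hy
  rw [← hu y hy, u.inner_map_map]
  exact inner_left_of_mem_orthogonal hx hy

theorem norm_map_sub_add_of_inner_eq_zero {f g : H} (hfg : ⟪f, g⟫_𝕜 = 0)
    (h : ⟪u (f - g) + g, g⟫_𝕜 = 0) : ‖u (f - g) + g‖ = ‖f‖ := by
  have h₁ := norm_sub_sq (𝕜 := 𝕜) (u (f - g) + g) g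
  have h₂ := norm_sub_sq (𝕜 := 𝕜) f g
  rw [add_sub_cancel_right, u.norm_map, h, map_zero, mul_zero, sub_zero] at h₁
  rw [hfg, map_zero, mul_zero, sub_zero] at h₂
  exact (sq_eq_sq₀ (norm_nonneg _) (norm_nonneg _)).1 (by linarith)

theorem eq_of_fixes_orthogonal (K : Submodule 𝕜 H) [K.HasOrthogonalProjection]
    {u v v' : H →ₗᵢ[𝕜] H} (hv : ∀ x ∈ Kᗮ, v x = x) (hv' : ∀ x ∈ Kᗮ, v' x = x)
    (hvu : ∀ x, ∃ y ∈ Kᗮ, u x - v x = u y - y) (hv'u : ∀ x, ∃ y ∈ Kᗮ, u x - v' x = u y - y) :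
    v = v' := by
  ext x
  obtain ⟨k, hk, r, hr, rfl⟩ := K.exists_add_mem_mem_orthogonal x
  suffices v k = v' k by rw [map_add, map_add, this, hv r hr, hv' r hr]
  obtain ⟨y, hy, hvy⟩ := hvu k
  obtain ⟨y', hy', hvy'⟩ := hv'u k
  have hdiff : v k - v' k = u (y' - y) - (y' - y) := by
    rw [map_sub, ← sub_sub_sub_cancel_left (v' k) (v k) (u k), hvy, hvy']
    abel
  have hfix : u (y' - y) = y' - y := u.apply_eq_self_of_inner_sub_eq_zero <| by
    rw [← hdiff]
    exact inner_right_of_mem_orthogonal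
      (K.sub_mem (v.apply_mem_of_fixes_orthogonal K hv hk)
        (v'.apply_mem_of_fixes_orthogonal K hv' hk))
      (Kᗮ.sub_mem hy' hy)
  rwa [hfix, sub_self, sub_eq_zero] at hdiff

end LinearIsometry

theorem LinearIsometryEquiv.exists_extension_fixing_orthogonal (K : Submodule 𝕜 H)
    [K.HasOrthogonalProjection] (w : K ≃ₗᵢ[𝕜] K) :
    ∃ v : H ≃ₗᵢ[𝕜] H, (∀ x : K, v x = w x) ∧ ∀ x ∈ Kᗮ, v x = x := by
  let P := prodEquivOfIsCompl K Kᗮ K.isCompl_orthogonal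
  let e : H ≃ₗ[𝕜] H := P.symm ≪≫ₗ w.toLinearEquiv.prodCongr (.refl 𝕜 Kᗮ) ≪≫ₗ P
  have he : ∀ (k : K) (r : Kᗮ), e (k + r) = w k + r := fun k r ↦ by
    simp [e, P]
  have hnorm : ∀ x, ‖e x‖ = ‖x‖ := by
    intro x
    obtain ⟨k, hk, r, hr, rfl⟩ := K.exists_add_mem_mem_orthogonal x
    have hkr := he ⟨k, hk⟩ ⟨r, hr⟩
    simp only at hkr
    rw [hkr, ← mul_self_inj (norm_nonneg _) (norm_nonneg _),
      norm_add_sq_eq_norm_sq_add_norm_sq_of_inner_eq_zero (𝕜 := 𝕜) _ _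
        (inner_right_of_mem_orthogonal (w ⟨k, hk⟩).2 hr),
      norm_add_sq_eq_norm_sq_add_norm_sq_of_inner_eq_zero (𝕜 := 𝕜) _ _
        (inner_right_of_mem_orthogonal hk hr), show ‖(w ⟨k, hk⟩ : H)‖ = ‖k‖ from w.norm_map _]
  refine ⟨{ e with norm_map' := hnorm }, fun k ↦ by simpa using he k 0, fun r hr ↦ ?_⟩
  simpa using he 0 ⟨r, hr⟩

theorem Submodule.mem_of_mem_orthogonal_inf_orthogonal {E F : Submodule 𝕜 H}
    [F.HasOrthogonalProjection] (hFE : F ≤ E) {z : H} (hzE : z ∈ E) (hz : z ∈ (E ⊓ Fᗮ)ᗮ) :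
    z ∈ F := by
  obtain ⟨f, hf, r, hr, rfl⟩ := F.exists_add_mem_mem_orthogonal z
  have hrE : r ∈ E ⊓ Fᗮ := ⟨by simpa using E.sub_mem hzE (hFE hf), hr⟩
  have hr0 : r = 0 := by
    simpa [inner_add_right, inner_left_of_mem_orthogonal hf hr] using
      inner_right_of_mem_orthogonal hrE hz
  rw [hr0, add_zero]
  exact hf

theorem exists_linearMap_map_sub_add_mem_orthogonal (G : Submodule 𝕜 H) [FiniteDimensional 𝕜 G]
    {K : Submodule 𝕜 H} (hKG : K ≤ Gᗮ) (u : H →ₗᵢ[𝕜] H) :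
    ∃ t : K →ₗ[𝕜] G, ∀ f : K, u (f - t f) + t f ∈ Gᗮ := by
  let P : H →ₗ[𝕜] G := G.orthogonalProjectionOnto
  let Φ : G →ₗ[𝕜] G := P ∘ₗ (u.toLinearMap - LinearMap.id) ∘ₗ G.subtype
  let c : K →ₗ[𝕜] G := P ∘ₗ u.toLinearMap ∘ₗ K.subtype
  have hc : LinearMap.range c ≤ LinearMap.range Φ := by
    rintro _ ⟨f, rfl⟩
    rw [← (LinearMap.range Φ).orthogonal_orthogonal]
    intro x hx
    have hux : u x = x := u.apply_eq_self_of_inner_sub_eq_zero <| by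
      have := inner_right_of_mem_orthogonal (LinearMap.mem_range_self Φ x) hx
      simp only [Φ, P, LinearMap.comp_apply, ContinuousLinearMap.coe_coe,
        inner_orthogonalProjectionOnto_eq_of_mem_right] at this
      simpa using this
    simp only [c, P, LinearMap.comp_apply, ContinuousLinearMap.coe_coe,
      inner_orthogonalProjectionOnto_eq_of_mem_left, LinearIsometry.coe_toLinearMap,
      Submodule.subtype_apply]
    rw [← hux, u.inner_map_map]
    exact inner_right_of_mem_orthogonal x.2 (hKG f.2)
  obtain ⟨t, ht⟩ := Φ.exists_comp_eq_of_range_le c hc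
  refine ⟨t, fun f ↦ ?_⟩
  have htf := LinearMap.congr_fun ht f
  rw [← orthogonalProjectionOnto_eq_zero_iff]
  simp only [Φ, c, P, LinearMap.comp_apply, ContinuousLinearMap.coe_coe, LinearMap.sub_apply,
    LinearIsometry.coe_toLinearMap, Submodule.subtype_apply, LinearMap.id_apply, map_sub,
    orthogonalProjectionOnto_mem_subspace_eq_self] at htf
  rw [map_add, map_sub, map_sub, ← htf, orthogonalProjectionOnto_mem_subspace_eq_self]
  abel

theorem exists_projection_of_unitary {E F : Submodule 𝕜 H} [FiniteDimensional 𝕜 E] (hFE : F ≤ E)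
    (u : H ≃ₗᵢ[𝕜] H) (hu : ∀ x ∈ Eᗮ, u x = x) :
    ∃ v : H ≃ₗᵢ[𝕜] H, (∀ x ∈ Fᗮ, v x = x) ∧ ∀ x : H, ∃ y ∈ Fᗮ, u x - v x = u y - y := by
  have : FiniteDimensional 𝕜 F := finiteDimensional_of_le hFE
  have hFG : F ≤ (E ⊓ Fᗮ)ᗮ := F.le_orthogonal_orthogonal.trans (orthogonal_le inf_le_right)
  obtain ⟨t, ht⟩ := exists_linearMap_map_sub_add_mem_orthogonal (E ⊓ Fᗮ) hFG u.toLinearIsometry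
  have hw : ∀ f : F, u (f - t f) + t f ∈ F := fun f ↦
    mem_of_mem_orthogonal_inf_orthogonal hFE
      (E.add_mem (u.toLinearIsometry.apply_mem_of_fixes_orthogonal E hu
        (E.sub_mem (hFE f.2) (t f).2.1)) (t f).2.1) (ht f)
  let w : F →ₗᵢ[𝕜] F :=
    { toLinearMap := LinearMap.codRestrict F
        (u.toLinearMap ∘ₗ (F.subtype - (E ⊓ Fᗮ).subtype ∘ₗ t) + (E ⊓ Fᗮ).subtype ∘ₗ t) hw
      norm_map' := fun f ↦ u.toLinearIsometry.norm_map_sub_add_of_inner_eq_zero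
        (inner_right_of_mem_orthogonal f.2 (t f).2.2)
        (inner_right_of_mem_orthogonal (hw f) (t f).2.2) }
  obtain ⟨v, hvF, hvperp⟩ := (w.toLinearIsometryEquiv rfl).exists_extension_fixing_orthogonal F
  refine ⟨v, hvperp, fun x ↦ ?_⟩
  obtain ⟨f, hf, r, hr, rfl⟩ := F.exists_add_mem_mem_orthogonal x
  refine ⟨t ⟨f, hf⟩ + r, Fᗮ.add_mem (t _).2.2 hr, ?_⟩
  have hvf : v f = u (f - t ⟨f, hf⟩) + t ⟨f, hf⟩ := hvF ⟨f, hf⟩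
  rw [map_add v, hvf, hvperp r hr, map_add u, map_add u, map_sub u]
  abel

end

theorem existsUnique_projection_of_unitary_general
    {H : Type*} [NormedAddCommGroup H] [InnerProductSpace ℂ H]
    (E F : Submodule ℂ H) [FiniteDimensional ℂ E] (hFE : F ≤ E)
    (u : H ≃ₗᵢ[ℂ] H) (hu : ∀ x ∈ Eᗮ, u x = x) :
    ∃! v : H ≃ₗᵢ[ℂ] H,
      (∀ x ∈ Fᗮ, v x = x) ∧
      (∀ x : H, ∃ y ∈ Fᗮ, u x - v x = u y - y) := by
  have : FiniteDimensional ℂ F := finiteDimensional_of_le hFE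
  obtain ⟨v, hv⟩ := exists_projection_of_unitary hFE u hu
  exact ⟨v, hv, fun v' hv' ↦ LinearIsometryEquiv.toLinearIsometry_injective <|
    LinearIsometry.eq_of_fixes_orthogonal F (u := u.toLinearIsometry) hv'.1 hv.1 hv'.2 hv.2⟩

/-- Projection of unitary operators: if `u` is a unitary operator on a complex
Hilbert space `H` fixing `Eᗮ` pointwise, where `E` is finite-dimensional and
`F ≤ E`, then there is a unique unitary `v` fixing `Fᗮ` pointwise such that
the range of `u - v` is contained in the image of `Fᗮ` under `u - 1`. -/
theorem existsUnique_projection_of_unitary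
    {H : Type*} [NormedAddCommGroup H] [InnerProductSpace ℂ H]
    [CompleteSpace H]
    (E F : Submodule ℂ H) [FiniteDimensional ℂ E] (hFE : F ≤ E)
    (u : H ≃ₗᵢ[ℂ] H) (hu : ∀ x ∈ Eᗮ, u x = x) :
    ∃! v : H ≃ₗᵢ[ℂ] H,
      (∀ x ∈ Fᗮ, v x = x) ∧
      (∀ x : H, ∃ y ∈ Fᗮ, u x - v x = u y - y) :=
  existsUnique_projection_of_unitary_general E F hFE u hu
end

section
/- With the notation of the projection of unitary operators: if G ⊆ F ⊆ E are subspaces of a complex Hilbert space H with E finite-dimensional, and u is a unitary operator fixing E^⊥ pointwise, then π_{F,G}(π_{E,F}(u)) = π_{E,G}(u). -/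
/-! Write `u x - w x = (u x - v x) + (v x - w x)`. The first summand is `(u - 1) z` with
`z ∈ Fᗮ`, and the second is `(v - 1) y` with `y ∈ Gᗮ`, which becomes `(u - 1) (y - z')` once
`u y - v y = (u - 1) z'` is used again. Since `Fᗮ ≤ Gᗮ`, the witness for `π_{E,G}(u)` is
`z + y - z'`. -/

theorem forall_exists_sub_eq_sub_self_trans {M 𝓕 : Type*} [AddCommGroup M]
    [FunLike 𝓕 M M] [AddMonoidHomClass 𝓕 M M]
    {A B : AddSubgroup M} (hAB : A ≤ B) (u : 𝓕) {v w : M → M}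
    (hv : ∀ x, ∃ y ∈ A, u x - v x = u y - y)
    (hw : ∀ x, ∃ y ∈ B, v x - w x = v y - y) :
    ∀ x, ∃ y ∈ B, u x - w x = u y - y := by
  intro x
  obtain ⟨z, hzA, hz⟩ := hv x
  obtain ⟨y, hyB, hy⟩ := hw x
  obtain ⟨z', hz'A, hz'⟩ := hv y
  have hvy : v y = u y - (u z' - z') := by rw [← hz']; abel
  refine ⟨z + y - z', sub_mem (add_mem (hAB hzA) hyB) (hAB hz'A), ?_⟩
  calc u x - w x = (u x - v x) + (v x - w x) := by abel
    _ = u (z + y - z') - (z + y - z') := by rw [hz, hy, hvy, map_sub, map_add]; abel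

theorem projection_of_unitary_tower_general
    {H : Type*} [NormedAddCommGroup H] [InnerProductSpace ℂ H]
    (F G : Submodule ℂ H)
    (hGF : G ≤ F)
    (u v w : H ≃ₗᵢ[ℂ] H)
    (hv₂ : ∀ x : H, ∃ y ∈ Fᗮ, u x - v x = u y - y)
    (hw₂ : ∀ x : H, ∃ y ∈ Gᗮ, v x - w x = v y - y) :
    ∀ x : H, ∃ y ∈ Gᗮ, u x - w x = u y - y :=
  forall_exists_sub_eq_sub_self_trans (A := Fᗮ.toAddSubgroup) (B := Gᗮ.toAddSubgroup)
    (Submodule.orthogonal_le hGF) u hv₂ hw₂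

/-- Tower property of the projection of unitary operators: if `v = π_{E,F}(u)`
and `w = π_{F,G}(v)` for subspaces `G ⊆ F ⊆ E` with `E` finite-dimensional,
then `w = π_{E,G}(u)`, i.e. `w` fixes `Gᗮ` pointwise and the range of `u - w`
is contained in the image of `Gᗮ` under `u - 1`. -/
theorem projection_of_unitary_tower
    {H : Type*} [NormedAddCommGroup H] [InnerProductSpace ℂ H]
    [CompleteSpace H]
    (E F G : Submodule ℂ H) [FiniteDimensional ℂ E]
    (hGF : G ≤ F) (hFE : F ≤ E)
    (u v w : H ≃ₗᵢ[ℂ] H)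
    (hu : ∀ x ∈ Eᗮ, u x = x)
    (hv₁ : ∀ x ∈ Fᗮ, v x = x)
    (hv₂ : ∀ x : H, ∃ y ∈ Fᗮ, u x - v x = u y - y)
    (hw₁ : ∀ x ∈ Gᗮ, w x = x)
    (hw₂ : ∀ x : H, ∃ y ∈ Gᗮ, v x - w x = v y - y) :
    ∀ x : H, ∃ y ∈ Gᗮ, u x - w x = u y - y :=
  projection_of_unitary_tower_general F G hGF u v w hv₂ hw₂
end

section
/- In the setting of the spectral recursion for virtual isometries, the rational function Φ(z) = Σ_{j=1}^n |μ_j|² λ_j/(λ_j - z) + |ν-1|²/(1-z) - (1 - conj(ν)) takes only purely imaginary values (or ∞) on the unit circle, using the identity Σ_j |μ_j|² + |ν|² = 1; consequently its roots on the unit circle strictly interlace with {λ_1,...,λ_n, 1}. -/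
/-!
Since `λ/(λ - z) = (1 + (λ + z)/(λ - z))/2` and `Σ |μ_j|² + |ν|² = 1`, the function `Φ` equals
`H(z)/2 - i Im ν`, where `H(z) = Σ_k a_k (λ_k + z)/(λ_k - z)` is a Herglotz sum with positive
weights over the poles `λ_k ∈ {1, λ_1, …, λ_n}`. For `‖λ‖ = ‖z‖ = 1` the kernel `(λ + z)/(λ - z)`
is fixed by `w ↦ -conj w`, hence purely imaginary; explicitly it is `i cot((t - θ)/2)` at
`λ = e^{iθ}`, `z = e^{it}`. So on an arc between consecutive poles `Φ(e^{it}) = 0` says that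
`Σ_k a_k cot((t - θ_k)/2) = 2 Im ν`, and the left side decreases strictly from `+∞` to `-∞`
along the arc.
-/

open Finset Real Complex

open Filter Topology ComplexConjugate

theorem ContinuousOn.existsUnique_eq_of_strictAntiOn {α δ : Type*}
    [ConditionallyCompleteLinearOrder α] [TopologicalSpace α] [OrderTopology α]
    [DenselyOrdered α] [LinearOrder δ] [TopologicalSpace δ] [OrderClosedTopology δ]
    {f : α → δ} {a b : α} (hab : a < b) (hf : ContinuousOn f (Set.Ioo a b))
    (hanti : StrictAntiOn f (Set.Ioo a b)) (ha : Tendsto f (𝓝[>] a) atTop)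
    (hb : Tendsto f (𝓝[<] b) atBot) (c : δ) :
    ∃! t, t ∈ Set.Ioo a b ∧ f t = c := by
  obtain ⟨t, ht, rfl⟩ := hf.surjOn_of_tendsto' (Set.nonempty_Ioo.2 hab)
    (by rwa [tendsto_comp_coe_Ioo_atBot hab]) (by rwa [tendsto_comp_coe_Ioo_atTop hab])
    (Set.mem_univ c)
  exact ⟨t, ⟨ht, rfl⟩, fun s hs => hanti.injOn hs.1 ht hs.2⟩

theorem Filter.tendsto_sum_atTop_of_eventually_ge {ι α M : Type*} [Fintype ι]
    [AddCommGroup M] [PartialOrder M] [IsOrderedAddMonoid M]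
    {l : Filter α} {f : ι → α → M} {k₀ : ι} (h₀ : Tendsto (f k₀) l atTop)
    (hbdd : ∀ k, ∃ C, ∀ᶠ x in l, C ≤ f k x) :
    Tendsto (fun x => ∑ k, f k x) l atTop := by
  classical
  choose C hC using hbdd
  simp_rw [← Finset.add_sum_erase _ _ (mem_univ k₀)]
  refine tendsto_atTop_add_right_of_le' _ (∑ k ∈ univ.erase k₀, C k) h₀ ?_
  filter_upwards [eventually_all.2 hC] with x hx
  exact Finset.sum_le_sum fun k _ => hx k

theorem Filter.tendsto_sum_atBot_of_eventually_le {ι α M : Type*} [Fintype ι]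
    [AddCommGroup M] [PartialOrder M] [IsOrderedAddMonoid M]
    {l : Filter α} {f : ι → α → M} {k₀ : ι} (h₀ : Tendsto (f k₀) l atBot)
    (hbdd : ∀ k, ∃ C, ∀ᶠ x in l, f k x ≤ C) :
    Tendsto (fun x => ∑ k, f k x) l atBot :=
  tendsto_sum_atTop_of_eventually_ge (M := Mᵒᵈ) h₀ hbdd

namespace Real

theorem cot_eq_tan_pi_div_two_sub (x : ℝ) : cot x = tan (π / 2 - x) := by
  rw [tan_pi_div_two_sub, tan_inv_eq_cot]

theorem strictAntiOn_cot_half_sub (q : ℝ) :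
    StrictAntiOn (fun t => cot ((t - q) / 2)) (Set.Ioo q (q + 2 * π)) := by
  intro s hs t ht hst
  simp only [cot_eq_tan_pi_div_two_sub]
  exact strictMonoOn_tan ⟨by linarith [ht.2], by linarith [ht.1]⟩
    ⟨by linarith [hs.2], by linarith [hs.1]⟩ (by linarith)

theorem continuousOn_cot_half_sub (q : ℝ) :
    ContinuousOn (fun t => cot ((t - q) / 2)) (Set.Ioo q (q + 2 * π)) := by
  simp only [cot_eq_tan_pi_div_two_sub]
  exact continuousOn_tan_Ioo.comp (by fun_prop) fun t ht =>
    ⟨by linarith [ht.2], by linarith [ht.1]⟩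

theorem tendsto_cot_half_sub_nhdsGT (q : ℝ) :
    Tendsto (fun t => cot ((t - q) / 2)) (𝓝[>] q) atTop := by
  simp only [cot_eq_tan_pi_div_two_sub]
  refine tendsto_tan_pi_div_two.comp (tendsto_nhdsWithin_iff.2 ⟨?_, ?_⟩)
  · have : Continuous fun t : ℝ => π / 2 - (t - q) / 2 := by fun_prop
    simpa using (this.tendsto q).mono_left nhdsWithin_le_nhds
  · filter_upwards [self_mem_nhdsWithin] with t (ht : q < t)
    rw [Set.mem_Iio]; linarith

theorem tendsto_cot_half_sub_nhdsLT (q : ℝ) :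
    Tendsto (fun t => cot ((t - q) / 2)) (𝓝[<] (q + 2 * π)) atBot := by
  simp only [cot_eq_tan_pi_div_two_sub]
  refine tendsto_tan_neg_pi_div_two.comp (tendsto_nhdsWithin_iff.2 ⟨?_, ?_⟩)
  · have : Continuous fun t : ℝ => π / 2 - (t - q) / 2 := by fun_prop
    convert (this.tendsto (q + 2 * π)).mono_left nhdsWithin_le_nhds using 2
    ring
  · filter_upwards [self_mem_nhdsWithin] with t (ht : t < q + 2 * π)
    rw [Set.mem_Ioi]; linarith

end Real

noncomputable def cotSum {ι : Type*} [Fintype ι] (a q : ι → ℝ) (t : ℝ) : ℝ :=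
  ∑ k, a k * Real.cot ((t - q k) / 2)

theorem existsUnique_cotSum_eq {ι : Type*} [Fintype ι] {a q : ι → ℝ} (ha : ∀ k, 0 < a k)
    {α β : ℝ} (hαβ : α < β) (hq : ∀ k, q k ∈ Set.Icc (β - 2 * π) α)
    (hα : ∃ k, q k = α) (hβ : ∃ k, q k = β - 2 * π) (c : ℝ) :
    ∃! t, t ∈ Set.Ioo α β ∧ cotSum a q t = c := by
  obtain ⟨k₀, hk₀⟩ := hα
  obtain ⟨k₁, hk₁⟩ := hβ
  have hsub : ∀ k, Set.Ioo α β ⊆ Set.Ioo (q k) (q k + 2 * π) := fun k t ht =>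
    ⟨(hq k).2.trans_lt ht.1, by linarith [(hq k).1, ht.2]⟩
  have hanti : ∀ k, AntitoneOn (fun t => a k * Real.cot ((t - q k) / 2)) (Set.Ioo α β) :=
    fun k s hs t ht hst => mul_le_mul_of_nonneg_left
      (((Real.strictAntiOn_cot_half_sub (q k)).antitoneOn) (hsub k hs) (hsub k ht) hst)
      (ha k).le
  -- each term is bounded near either end of the arc by its value at the midpoint
  have hmid : (α + β) / 2 ∈ Set.Ioo α β := ⟨by linarith, by linarith⟩
  refine ContinuousOn.existsUnique_eq_of_strictAntiOn hαβ ?_ ?_ ?_ ?_ c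
  · exact continuousOn_finsetSum _ fun k _ =>
      ((Real.continuousOn_cot_half_sub (q k)).mono (hsub k)).const_smul (a k)
  · intro s hs t ht hst
    exact Finset.sum_lt_sum_of_nonempty ⟨k₀, mem_univ _⟩ fun k _ =>
      mul_lt_mul_of_pos_left (Real.strictAntiOn_cot_half_sub (q k) (hsub k hs) (hsub k ht) hst)
        (ha k)
  · refine tendsto_sum_atTop_of_eventually_ge (k₀ := k₀) ?_
      fun k => ⟨a k * Real.cot (((α + β) / 2 - q k) / 2), ?_⟩
    · rw [← hk₀]
      exact (Real.tendsto_cot_half_sub_nhdsGT (q k₀)).const_mul_atTop (ha k₀)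
    · filter_upwards [Ioo_mem_nhdsGT hmid.1] with t ht
      exact hanti k ⟨ht.1, ht.2.trans hmid.2⟩ hmid ht.2.le
  · refine tendsto_sum_atBot_of_eventually_le (k₀ := k₁) ?_
      fun k => ⟨a k * Real.cot (((α + β) / 2 - q k) / 2), ?_⟩
    · rw [show β = q k₁ + 2 * π by linarith]
      exact (Real.tendsto_cot_half_sub_nhdsLT (q k₁)).const_mul_atBot (ha k₁)
    · filter_upwards [Ioo_mem_nhdsLT hmid.2] with t ht
      exact hanti k hmid ⟨hmid.1.trans ht.1, ht.2⟩ ht.1.le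

theorem Complex.re_add_div_sub_eq_zero {w z : ℂ} (hw : ‖w‖ = 1) (hz : ‖z‖ = 1) :
    ((w + z) / (w - z)).re = 0 := by
  obtain rfl | hwz := eq_or_ne w z
  · simp
  have hw0 : w ≠ 0 := by rintro rfl; simp at hw
  have hz0 : z ≠ 0 := by rintro rfl; simp at hz
  have hconj : conj ((w + z) / (w - z)) = -((w + z) / (w - z)) := by
    rw [map_div₀, map_add, map_sub, ← inv_eq_conj hw, ← inv_eq_conj hz,
      div_eq_iff (by simpa [sub_eq_zero] using hwz)]
    field_simp [sub_ne_zero.2 hwz]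
    ring
  have hre := congrArg re hconj
  rw [conj_re, neg_re] at hre
  linarith

theorem Complex.add_div_sub_exp_eq_I_mul_cot (q t : ℝ) :
    (exp (I * q) + exp (I * t)) / (exp (I * q) - exp (I * t)) = I * Real.cot ((t - q) / 2) := by
  have hexp : exp (I * t) = exp (I * q) * exp (2 * I * (((t - q) / 2 : ℝ) : ℂ)) := by
    rw [← exp_add]; push_cast; ring_nf
  rw [ofReal_cot, cot_eq_exp_ratio, hexp, ← mul_one_add, ← mul_one_sub,
    mul_div_mul_left _ _ (exp_ne_zero _), mul_div_assoc', mul_div_mul_left _ _ I_ne_zero, add_comm]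

theorem Complex.exp_I_mul_ne_of_sub_mem_Ioo {s t : ℝ} (h : t - s ∈ Set.Ioo 0 (2 * π)) :
    exp (I * t) ≠ exp (I * s) := by
  rw [Ne, exp_eq_exp_iff_exists_int]
  rintro ⟨m, hm⟩
  have hts : t - s = m * (2 * π) := by
    have := congrArg im hm
    simp at this
    linarith
  rw [hts] at h
  have h0 : (0 : ℝ) < m := pos_of_mul_pos_left h.1 (by positivity)
  have h1 : (m : ℝ) < 1 := (mul_lt_iff_lt_one_left (by positivity)).1 h.2
  norm_cast at h0 h1
  omega

noncomputable def herglotzSum {ι : Type*} [Fintype ι] (a : ι → ℝ) (w : ι → ℂ) (z : ℂ) : ℂ :=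
  ∑ k, a k * ((w k + z) / (w k - z))

theorem re_herglotzSum {ι : Type*} [Fintype ι] (a : ι → ℝ) {w : ι → ℂ} {z : ℂ}
    (hw : ∀ k, ‖w k‖ = 1) (hz : ‖z‖ = 1) : (herglotzSum a w z).re = 0 := by
  simp [herglotzSum, re_sum, re_add_div_sub_eq_zero (hw _) hz]

theorem herglotzSum_exp {ι : Type*} [Fintype ι] (a q : ι → ℝ) (t : ℝ) :
    herglotzSum a (fun k => exp (I * q k)) (exp (I * t)) = I * cotSum a q t := by
  simp [herglotzSum, cotSum, add_div_sub_exp_eq_I_mul_cot, mul_sum, mul_left_comm]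

noncomputable def phi {n : ℕ} (θ : Fin n → ℝ) (μ : Fin n → ℂ) (ν z : ℂ) : ℂ :=
  (∑ j, (‖μ j‖ ^ 2 : ℂ) * (exp (I * θ j) / (exp (I * θ j) - z))) +
    (‖ν - 1‖ ^ 2 : ℂ) / (1 - z) - (1 - conj ν)

def poleAngle {n : ℕ} (θ : Fin n → ℝ) : Fin (n + 1) → ℝ := Fin.cons 0 θ

noncomputable def poleWeight {n : ℕ} (μ : Fin n → ℂ) (ν : ℂ) : Fin (n + 1) → ℝ :=
  Fin.cons (‖ν - 1‖ ^ 2) fun j => ‖μ j‖ ^ 2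

theorem phi_eq_herglotzSum {n : ℕ} {θ : Fin n → ℝ} {μ : Fin n → ℂ} {ν : ℂ}
    (hsum : (∑ j, ‖μ j‖^2) + ‖ν‖^2 = 1) {z : ℂ} (hz : ∀ k, z ≠ exp (I * poleAngle θ k)) :
    phi θ μ ν z =
      herglotzSum (poleWeight μ ν) (fun k => exp (I * poleAngle θ k)) z / 2 - I * ν.im := by
  have hsplit : ∀ w ≠ z, w / (w - z) = 1 / 2 + (w + z) / (w - z) / 2 := fun w hw => by
    field_simp [sub_ne_zero.2 hw]; ring
  have h1 : 1 / (1 - z) = 1 / 2 + (1 + z) / (1 - z) / 2 := by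
    simpa using hsplit 1 (by simpa [poleAngle] using (hz 0).symm)
  have hnorm : ((‖ν - 1‖ ^ 2 : ℝ) : ℂ) = ‖ν‖ ^ 2 - 2 * ν.re + 1 := by
    rw [← ofReal_pow, Complex.sq_norm, Complex.sq_norm, normSq_apply, normSq_apply]
    push_cast
    simp
    ring
  have hsumC : ∑ j, ((‖μ j‖ ^ 2 : ℝ) : ℂ) = 1 - ‖ν‖ ^ 2 := by
    rw [eq_sub_iff_add_eq]; exact_mod_cast hsum
  rw [phi, herglotzSum, Fin.sum_univ_succ]
  simp only [poleWeight, poleAngle, Fin.cons_zero, Fin.cons_succ, ofReal_zero, mul_zero,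
    Complex.exp_zero]
  rw [Finset.sum_congr rfl fun j _ => by
    rw [hsplit _ (by simpa [poleAngle] using (hz j.succ).symm)]]
  rw [div_eq_mul_one_div _ (1 - z), h1]
  push_cast at hnorm hsumC ⊢
  simp only [mul_add, Finset.sum_add_distrib, ← Finset.sum_mul, mul_div_assoc', ← Finset.sum_div,
    hsumC]
  rw [show (starRingEnd ℂ) ν = ν.re - ν.im * I by apply Complex.ext <;> simp, hnorm]
  ring

theorem poleWeight_pos {n : ℕ} {μ : Fin n → ℂ} (hμ : ∀ j, μ j ≠ 0) {ν : ℂ} (hν : ν ≠ 1) :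
    ∀ k, 0 < poleWeight μ ν k :=
  Fin.cases (by simp [poleWeight, sub_ne_zero.2 hν]) fun j => by simp [poleWeight, hμ j]

theorem re_phi {n : ℕ} {θ : Fin n → ℝ} {μ : Fin n → ℂ} {ν : ℂ}
    (hsum : (∑ j, ‖μ j‖^2) + ‖ν‖^2 = 1) {z : ℂ} (hz : ‖z‖ = 1)
    (hpole : ∀ k, z ≠ exp (I * poleAngle θ k)) : (phi θ μ ν z).re = 0 := by
  simp [phi_eq_herglotzSum hsum hpole, re_herglotzSum _ (fun k => norm_exp_I_mul_ofReal _) hz]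

theorem phi_exp_eq_zero_iff {n : ℕ} {θ : Fin n → ℝ} {μ : Fin n → ℂ} {ν : ℂ}
    (hsum : (∑ j, ‖μ j‖^2) + ‖ν‖^2 = 1) {q : Fin (n + 1) → ℝ}
    (hq : ∀ k, q k = poleAngle θ k ∨ q k = poleAngle θ k - 2 * π) {t : ℝ}
    (ht : ∀ k, t - q k ∈ Set.Ioo 0 (2 * π)) :
    phi θ μ ν (exp (I * t)) = 0 ↔ cotSum (poleWeight μ ν) q t = 2 * ν.im := by
  have hexp : ∀ k, exp (I * q k) = exp (I * poleAngle θ k) := fun k => by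
    rcases hq k with h | h
    · rw [h]
    · rw [h, ofReal_sub, mul_sub, ofReal_mul, ofReal_ofNat, show I * (2 * π) = 2 * π * I by ring,
        exp_periodic.sub_eq]
  have hpole : ∀ k, exp (I * t) ≠ exp (I * poleAngle θ k) := fun k =>
    hexp k ▸ exp_I_mul_ne_of_sub_mem_Ioo (ht k)
  rw [phi_eq_herglotzSum hsum hpole, ← funext hexp, herglotzSum_exp,
    show I * cotSum (poleWeight μ ν) q t / 2 - I * ν.im
      = I / 2 * ((cotSum (poleWeight μ ν) q t - 2 * ν.im : ℝ) : ℂ) by push_cast; ring]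
  simp only [mul_eq_zero, div_eq_zero_iff, I_ne_zero, OfNat.ofNat_ne_zero, or_self, false_or,
    ofReal_eq_zero, sub_eq_zero]

/-- Angles beyond the arc `(p j, β)` are moved down by `2π`, so that all lie in `[β - 2π, p j]`. -/
theorem exists_lift_mem_Icc {m : ℕ} {p : Fin (m + 1) → ℝ} (hp : StrictMono p) (hp0 : p 0 = 0)
    (hlt : ∀ k, p k < 2 * π) (j : Fin (m + 1)) :
    p j < (Fin.snoc p (2 * π) : Fin (m + 2) → ℝ) j.succ ∧
    ∃ q : Fin (m + 1) → ℝ, (∀ k, q k = p k ∨ q k = p k - 2 * π) ∧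
      (∀ k, q k ∈ Set.Icc ((Fin.snoc p (2 * π) : Fin (m + 2) → ℝ) j.succ - 2 * π) (p j)) ∧
      (∃ k, q k = p j) ∧ ∃ k, q k = (Fin.snoc p (2 * π) : Fin (m + 2) → ℝ) j.succ - 2 * π := by
  have hp_nonneg : ∀ k, 0 ≤ p k := fun k => hp0 ▸ hp.monotone (Fin.zero_le k)
  induction j using Fin.lastCases with
  | last =>
    rw [Fin.succ_last, Fin.snoc_last, sub_self]
    exact ⟨hlt _, p, fun k => .inl rfl, fun k => ⟨hp_nonneg k, hp.monotone (Fin.le_last k)⟩,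
      ⟨_, rfl⟩, 0, hp0⟩
  | cast i =>
    rw [← Fin.castSucc_succ, Fin.snoc_castSucc]
    refine ⟨hp (Fin.castSucc_lt_succ (i := i)),
      fun k => if k ≤ i.castSucc then p k else p k - 2 * π,
      fun k => by dsimp only; split_ifs <;> simp, fun k => ?_, ⟨i.castSucc, by simp⟩,
      ⟨i.succ, by simp [(Fin.castSucc_lt_succ (i := i)).not_ge]⟩⟩
    dsimp only
    split_ifs with hk
    · exact ⟨by linarith [hp_nonneg k, hlt i.succ], hp.monotone hk⟩
    · have hik : p i.succ ≤ p k := hp.monotone (Fin.castSucc_lt_iff_succ_le.1 (not_le.1 hk))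
      exact ⟨by linarith, by linarith [hlt k, hp_nonneg i.castSucc]⟩

/-- The function `Φ(z) = Σ |μ_j|² λ_j/(λ_j - z) + |ν-1|²/(1-z) - (1 - conj ν)`
takes only purely imaginary values on the unit circle (away from its poles),
and consequently its roots on the unit circle strictly interlace between `1`
and the points `λ_1, …, λ_n`: each of the `n+1` arcs determined by the angles
`0 < θ_1 < ⋯ < θ_n < 2π` contains exactly one root. -/
theorem Phi_purely_imaginary_and_interlacing (n : ℕ)
    (θ : Fin n → ℝ) (hθ0 : ∀ j, 0 < θ j) (hθmono : StrictMono θ)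
    (hθtop : ∀ j, θ j < 2 * π)
    (μ : Fin n → ℂ) (hμ : ∀ j, μ j ≠ 0) (ν : ℂ) (hν : ν ≠ 1)
    (hsum : (∑ j, ‖μ j‖^2) + ‖ν‖^2 = 1) :
    (∀ z : ℂ, ‖z‖ = 1 → z ≠ 1 → (∀ j, z ≠ Complex.exp (Complex.I * θ j)) →
      ((∑ j, (‖μ j‖^2 : ℂ) * (Complex.exp (Complex.I * θ j) /
          (Complex.exp (Complex.I * θ j) - z))) +
        (‖ν - 1‖^2 : ℂ) / (1 - z) - (1 - (starRingEnd ℂ) ν)).re = 0) ∧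
    (∀ j : Fin (n+1), ∃! t : ℝ,
      t ∈ Set.Ioo ((Fin.cons 0 (Fin.snoc θ (2 * π)) : Fin (n+2) → ℝ) j.castSucc)
        ((Fin.cons 0 (Fin.snoc θ (2 * π)) : Fin (n+2) → ℝ) j.succ) ∧
      (∑ k, (‖μ k‖^2 : ℂ) * (Complex.exp (Complex.I * θ k) /
          (Complex.exp (Complex.I * θ k) - Complex.exp (Complex.I * t)))) +
        (‖ν - 1‖^2 : ℂ) / (1 - Complex.exp (Complex.I * t))
        - (1 - (starRingEnd ℂ) ν) = 0) := by
  refine ⟨fun z hz hz1 hzθ => re_phi hsum hz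
    (Fin.cases (by simpa [poleAngle] using hz1) (by simpa [poleAngle] using hzθ)), fun j => ?_⟩
  obtain ⟨hαβ, q, hqp, hq, hα, hβ⟩ := exists_lift_mem_Icc (Fin.strictMono_cons.2 ⟨hθ0, hθmono⟩)
    (p := poleAngle θ) rfl (Fin.cases (by positivity) hθtop) j
  rw [Fin.cons_snoc_eq_snoc_cons, Fin.snoc_castSucc]
  refine (existsUnique_congr fun t => and_congr_right fun ht => ?_).1
    (existsUnique_cotSum_eq (poleWeight_pos hμ hν) hαβ hq hα hβ (2 * ν.im))
  obtain ⟨hαt, htβ⟩ : poleAngle θ j < t ∧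
      t < (Fin.snoc (poleAngle θ) (2 * π) : Fin (n + 2) → ℝ) j.succ := ht
  exact (phi_exp_eq_zero_iff hsum hqp fun k =>
    ⟨by linarith [(hq k).2], by linarith [(hq k).1]⟩).symm
end
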